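/- Relative bound for quaternionic equiangular lines: let v_1, …, v_n ∈ ℍ^d, n ≥ 2, be unit vectors that are equiangular, i.e., |⟨v_j, v_k⟩|² = λ for all j ≠ k. Then λ ≥ (n − d)/(d(n − 1)), with equality if and only if V·Vᴴ = (n/d)·I_d (the vectors form a tight frame); consequently, if λ < 1/d then n ≤ (1 − λ)/(1/d − λ). -/

import Mathlib

/-!
The frame potential `∑ j k, |⟨v j, v k⟩|²` is the squared Frobenius norm of the Gram matrix
`Vᴴ V`, and this equals that of the frame operator `G = V Vᴴ` because
`re tr (A B) = re tr (B A)` over `ℍ`. For equiangular unit vectors the potential is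
`n + n (n - 1) λ`, while `re tr G = n`; splitting off the scalar part of `G` gives
`‖G‖² = n² / d + ‖G - (n / d) I‖²`. Hence `n + n (n - 1) λ ≥ n² / d`, with equality exactly
when `G = (n / d) I`.
-/

open Quaternion Matrix BigOperators

/-- Euclidean inner product on `ℍ^d`: `⟨v,w⟩ = ∑ i, conj (w i) * v i`
(linear in the first variable). -/
noncomputable def qip {d : ℕ} (v w : Fin d → ℍ[ℝ]) : ℍ[ℝ] :=
  ∑ i, star (w i) * v i

/-- Squared Euclidean norm on `ℍ^d`, a nonnegative real. -/
noncomputable def nsq {d : ℕ} (v : Fin d → ℍ[ℝ]) : ℝ :=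
  ∑ i, Quaternion.normSq (v i)

namespace Quaternion

theorem re_mul_comm (a b : ℍ[ℝ]) : (a * b).re = (b * a).re := by
  simp only [re_mul]; ring

theorem re_sum {ι : Type*} (s : Finset ι) (f : ι → ℍ[ℝ]) :
    (∑ i ∈ s, f i).re = ∑ i ∈ s, (f i).re :=
  map_sum (QuaternionAlgebra.reₗ _ _ _) f s

end Quaternion

namespace Matrix

variable {l m : Type*} [Fintype l] [Fintype m]

theorem re_trace_mul_comm (A : Matrix l m ℍ[ℝ]) (B : Matrix m l ℍ[ℝ]) :
    (A * B).trace.re = (B * A).trace.re := by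
  simp only [trace, diag, mul_apply, Quaternion.re_sum]
  rw [Finset.sum_comm]
  simp only [Quaternion.re_mul_comm]

noncomputable def frobeniusNormSq (A : Matrix l m ℍ[ℝ]) : ℝ :=
  ∑ i, ∑ j, Quaternion.normSq (A i j)

theorem frobeniusNormSq_nonneg (A : Matrix l m ℍ[ℝ]) : 0 ≤ frobeniusNormSq A :=
  Finset.sum_nonneg fun _ _ => Finset.sum_nonneg fun _ _ => normSq_nonneg

theorem frobeniusNormSq_eq_zero_iff (A : Matrix l m ℍ[ℝ]) :
    frobeniusNormSq A = 0 ↔ A = 0 := by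
  simp [frobeniusNormSq, Finset.sum_eq_zero_iff_of_nonneg, Finset.sum_nonneg, normSq_nonneg,
    ← Matrix.ext_iff]

theorem frobeniusNormSq_eq_re_trace (A : Matrix l m ℍ[ℝ]) :
    frobeniusNormSq A = (A * Aᴴ).trace.re := by
  simp [frobeniusNormSq, trace, mul_apply, Quaternion.re_sum, normSq_def]

theorem frobeniusNormSq_conjTranspose_mul_self (A : Matrix l m ℍ[ℝ]) :
    frobeniusNormSq (Aᴴ * A) = frobeniusNormSq (A * Aᴴ) := by
  simp only [frobeniusNormSq_eq_re_trace, conjTranspose_mul, conjTranspose_conjTranspose,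
    Matrix.mul_assoc]
  rw [re_trace_mul_comm]
  simp only [Matrix.mul_assoc]

theorem frobeniusNormSq_sub_smul_one [DecidableEq l] (G : Matrix l l ℍ[ℝ]) (c : ℝ) :
    frobeniusNormSq (G - c • 1) =
      frobeniusNormSq G - 2 * c * G.trace.re + c ^ 2 * Fintype.card l := by
  -- `conjTranspose_smul` needs `StarModule ℝ ℍ[ℝ]`, which is not an instance
  have hc : (c • (1 : Matrix l l ℍ[ℝ]))ᴴ = c • 1 := by
    refine Matrix.ext fun i j => ?_
    by_cases h : i = j
    · subst h; simp
    · simp [one_apply_ne h, one_apply_ne (Ne.symm h)]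
  simp only [frobeniusNormSq_eq_re_trace, conjTranspose_sub, hc, sub_mul, mul_sub,
    Matrix.smul_mul, Matrix.mul_smul, Matrix.one_mul, Matrix.mul_one, smul_smul, trace_sub,
    trace_smul, trace_one, trace_conjTranspose, re_sub, re_smul, re_star, smul_eq_mul, re_natCast]
  ring

theorem frobeniusNormSq_eq_sq_re_trace_div_add [DecidableEq l] (G : Matrix l l ℍ[ℝ]) :
    frobeniusNormSq G = G.trace.re ^ 2 / Fintype.card l +
      frobeniusNormSq (G - (G.trace.re / Fintype.card l) • 1) := by
  rw [frobeniusNormSq_sub_smul_one]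
  rcases eq_or_ne (Fintype.card l : ℝ) 0 with h | h
  · simp [h]
  · field_simp
    ring

end Matrix

section Equiangular

variable {d n : ℕ}

theorem qip_self (x : Fin d → ℍ[ℝ]) : qip x x = (nsq x : ℍ[ℝ]) := by
  simp only [qip, nsq, star_mul_self, ← algebraMap_def, map_sum]

theorem frobeniusNormSq_of_columns (v : Fin n → Fin d → ℍ[ℝ]) :
    frobeniusNormSq (of fun i j => v j i) = ∑ j, nsq (v j) := by
  simp only [frobeniusNormSq, nsq, of_apply]
  exact Finset.sum_comm

theorem frobeniusNormSq_gram (v : Fin n → Fin d → ℍ[ℝ]) :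
    frobeniusNormSq ((of fun i j => v j i)ᴴ * of fun i j => v j i) =
      ∑ j, ∑ k, normSq (qip (v j) (v k)) := by
  simp only [frobeniusNormSq, mul_apply, conjTranspose_apply, of_apply, qip]
  exact Finset.sum_comm

theorem sum_normSq_qip_of_equiangular (v : Fin n → Fin d → ℍ[ℝ]) (lam : ℝ)
    (hunit : ∀ j, nsq (v j) = 1)
    (hequi : ∀ j k, j ≠ k → normSq (qip (v j) (v k)) = lam) :
    ∑ j, ∑ k, normSq (qip (v j) (v k)) = n + n * (n - 1) * lam := by
  have hrow : ∀ j, ∑ k, normSq (qip (v j) (v k)) = 1 + (n - 1) * lam := by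
    intro j
    rw [← Finset.add_sum_erase _ _ (Finset.mem_univ j), qip_self, hunit, normSq_coe, one_pow,
      Finset.sum_congr rfl fun k hk => hequi j k (Finset.ne_of_mem_erase hk).symm]
    simp [Nat.cast_sub (Nat.succ_le_of_lt j.pos)]
  simp [hrow]
  ring

end Equiangular

theorem relative_bound_of_frame_potential {n d lam E : ℝ} (hd : 0 < d) (hn : 1 < n)
    (hE : 0 ≤ E) (h : n + n * (n - 1) * lam = n ^ 2 / d + E) :
    lam ≥ (n - d) / (d * (n - 1)) ∧ (lam = (n - d) / (d * (n - 1)) ↔ E = 0) ∧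
      (lam < 1 / d → n ≤ (1 - lam) / (1 / d - lam)) := by
  have hn1 : n - 1 ≠ 0 := by linarith
  have hgap : lam - (n - d) / (d * (n - 1)) = E / (n * (n - 1)) := by
    field_simp at h ⊢
    linear_combination h
  have hpos : 0 < n * (n - 1) := by nlinarith
  have hbound : lam ≥ (n - d) / (d * (n - 1)) := by
    linarith [div_nonneg hE hpos.le]
  refine ⟨hbound, ?_, fun hlt => ?_⟩
  · rw [← sub_eq_zero, hgap, div_eq_zero_iff, or_iff_left hpos.ne']
  · rw [ge_iff_le, div_le_iff₀ (by nlinarith)] at hbound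
    rw [le_div_iff₀ (by linarith)]
    refine le_of_mul_le_mul_right ?_ hd
    field_simp
    linarith

/-- Relative bound for quaternionic equiangular lines: for `n ≥ 2` equiangular unit
vectors in `ℍ^d` with common angle `λ`, one has `λ ≥ (n−d)/(d(n−1))`, with
equality iff `V Vᴴ = (n/d) I_d` (the vectors form a tight frame); consequently,
if `λ < 1/d` then `n ≤ (1−λ)/(1/d−λ)`. -/
theorem relative_bound_equiangular_lines (d n : ℕ) (hn : 2 ≤ n) (lam : ℝ)
    (v : Fin n → (Fin d → ℍ[ℝ]))
    (hunit : ∀ j, nsq (v j) = 1)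
    (hequi : ∀ j k, j ≠ k → Quaternion.normSq (qip (v j) (v k)) = lam) :
    lam ≥ ((n : ℝ) - d) / (d * ((n : ℝ) - 1)) ∧
    (lam = ((n : ℝ) - d) / (d * ((n : ℝ) - 1)) ↔
      (Matrix.of fun i j => v j i) * (Matrix.of fun i j => v j i)ᴴ =
        ((n : ℝ) / (d : ℝ)) • (1 : Matrix (Fin d) (Fin d) ℍ[ℝ])) ∧
    (lam < 1 / (d : ℝ) → (n : ℝ) ≤ (1 - lam) / (1 / (d : ℝ) - lam)) := by
  have hd : 0 < d := Nat.pos_of_ne_zero fun hd0 => by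
    subst hd0
    simpa [nsq] using hunit ⟨0, by omega⟩
  set V : Matrix (Fin d) (Fin n) ℍ[ℝ] := of fun i j => v j i
  have htrace : (V * Vᴴ).trace.re = n := by
    simp [← frobeniusNormSq_eq_re_trace, V, frobeniusNormSq_of_columns, hunit]
  have hpotential : frobeniusNormSq (V * Vᴴ) = n + n * (n - 1) * lam := by
    rw [← frobeniusNormSq_conjTranspose_mul_self, frobeniusNormSq_gram,
      sum_normSq_qip_of_equiangular v lam hunit hequi]
  have hsplit := frobeniusNormSq_eq_sq_re_trace_div_add (V * Vᴴ)
  rw [htrace, hpotential, Fintype.card_fin] at hsplit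
  obtain ⟨hbound, hiff, hcount⟩ := relative_bound_of_frame_potential (by exact_mod_cast hd)
    (by exact_mod_cast hn) (frobeniusNormSq_nonneg _) hsplit
  exact ⟨hbound, hiff.trans (by rw [frobeniusNormSq_eq_zero_iff, sub_eq_zero]), hcount⟩
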